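/- arXiv:1903.00581 — 3 statements merged into one kernel-verified Lean document; each statement's English description precedes it below -/
import Mathlib

section
/- Let e be an edge of a cycle graph with positive edge weights and total edge weight C such that c(e) > C − c(e). Then the weighted shortest-path distance between the two endpoints of e equals C − c(e); in particular, no minimum-weight walk between the endpoints of e traverses e. -/
/-!
In a connected graph of maximum degree two, a cycle is closed under adjacency, so it passes
through every vertex and uses every edge. A connected 2-regular graph has no leaf, so it is not
a tree and contains a cycle; hence every edge `e = ab` lies on a cycle, i.e. some path from `a`
to `b` avoids `e`. Closing any `a`–`b` walk that avoids `e` (after shortening it to a path) with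
`e` gives a cycle, so such a walk traverses every edge other than `e` and costs at least
`C - c(e)`, with equality for the path. A walk through `e` costs at least `c(e) > C - c(e)`.
-/

/-- A cycle graph: a finite connected simple graph with at least 3 vertices in
which every vertex has degree 2. -/
def IsCycleGraph {V : Type*} [Fintype V] (G : SimpleGraph V) [DecidableRel G.Adj] : Prop :=
  G.Connected ∧ 3 ≤ Fintype.card V ∧ ∀ v : V, G.degree v = 2

/-- The cost of a walk: the sum of the weights of the edges it traverses,
counted with multiplicity. -/
def walkCost {V : Type*} {G : SimpleGraph V} (c : Sym2 V → ℝ) {u v : V}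
    (p : G.Walk u v) : ℝ :=
  (p.edges.map c).sum

open SimpleGraph Finset

namespace SimpleGraph

variable {V : Type*} {G : SimpleGraph V}

theorem Walk.IsCycle.mem_edges_of_degree_le_two [G.LocallyFinite] (hconn : G.Connected)
    (hdeg : ∀ v, G.degree v ≤ 2) {u : V} {c : G.Walk u u} (hc : c.IsCycle) {e : Sym2 V}
    (he : e ∈ G.edgeSet) : e ∈ c.edges := by
  have hnbr : ∀ v ∈ c.support, c.toSubgraph.neighborSet v = G.neighborSet v := fun v hv =>
    Set.eq_of_subset_of_ncard_le (c.toSubgraph.neighborSet_subset v)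
      (by rw [hc.ncard_neighborSet_toSubgraph_eq_two hv, Set.ncard_eq_toFinset_card',
        Set.toFinset_card, card_neighborSet_eq_degree]; exact hdeg v)
      (G.neighborSet v).toFinite
  have hclosed : ∀ v w, G.Adj v w → v ∈ c.support → w ∈ c.support := fun v w hvw hv =>
    c.mem_verts_toSubgraph.1 (Subgraph.Adj.snd_mem (by
      rw [← Subgraph.mem_neighborSet, hnbr v hv]; exact hvw))
  have hall : ∀ v, v ∈ c.support := by
    intro v
    by_contra hv
    obtain ⟨d, -, hd₁, hd₂⟩ := (hconn.preconnected u v).some.exists_boundary_dart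
      {w | w ∈ c.support} c.start_mem_support hv
    exact hd₂ (hclosed _ _ d.adj hd₁)
  induction e using Sym2.ind with
  | _ x y =>
    rw [← c.mem_edges_toSubgraph, Subgraph.mem_edgeSet, ← Subgraph.mem_neighborSet,
      hnbr x (hall x)]
    exact he

theorem Connected.exists_isCycle_of_two_le_degree [Fintype V] [DecidableRel G.Adj]
    (hconn : G.Connected) (hdeg : ∀ v, 2 ≤ G.degree v) :
    ∃ (u : V) (c : G.Walk u u), c.IsCycle := by
  obtain ⟨v⟩ := hconn.nonempty
  obtain ⟨w, hvw⟩ := G.degree_pos_iff_exists_adj v |>.1 (by linarith [hdeg v])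
  have : Nontrivial V := ⟨v, w, hvw.ne⟩
  by_contra! hacyc
  obtain ⟨x, hx⟩ := IsTree.exists_vert_degree_one_of_nontrivial ⟨hconn, fun u c => hacyc u c⟩
  linarith [hdeg x]

theorem Connected.not_isBridge_of_isRegularOfDegree_two [Fintype V] [DecidableRel G.Adj]
    (hconn : G.Connected) (hreg : G.IsRegularOfDegree 2) {e : Sym2 V} (he : e ∈ G.edgeSet) :
    ¬ G.IsBridge e := by
  obtain ⟨u, c, hc⟩ := hconn.exists_isCycle_of_two_le_degree fun v => (hreg v).ge
  rw [isBridge_iff_forall_cycle_notMem he]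
  exact fun h => h c hc (hc.mem_edges_of_degree_le_two hconn (fun v => (hreg v).le) he)

theorem Walk.mem_edges_of_ne_of_notMem_edges [G.LocallyFinite] (hconn : G.Connected)
    (hdeg : ∀ v, G.degree v ≤ 2) {a b : V} (hab : G.Adj a b) {q : G.Walk a b}
    (hq : s(a, b) ∉ q.edges) {e : Sym2 V} (he : e ∈ G.edgeSet) (hne : e ≠ s(a, b)) :
    e ∈ q.edges := by
  classical
  have hcycle : (Walk.cons hab.symm q.bypass).IsCycle :=
    (Walk.cons_isCycle_iff _ _).2 ⟨q.bypass_isPath, fun h =>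
      hq (Sym2.eq_swap ▸ q.edges_bypass_subset_edges h)⟩
  have := hcycle.mem_edges_of_degree_le_two hconn hdeg he
  rw [Walk.edges_cons, List.mem_cons, Sym2.eq_swap] at this
  exact q.edges_bypass_subset_edges (this.resolve_left hne)

end SimpleGraph

section WalkCost

variable {V : Type*} {G : SimpleGraph V} {c : Sym2 V → ℝ} {u v : V}

theorem le_walkCost_of_mem_edges (hc : ∀ e ∈ G.edgeSet, 0 ≤ c e) {p : G.Walk u v} {e : Sym2 V}
    (he : e ∈ p.edges) : c e ≤ walkCost c p :=
  List.single_le_sum (by simpa using fun e he => hc e (p.edges_subset_edgeSet he)) _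
    (List.mem_map_of_mem he)

theorem sum_le_walkCost [DecidableEq V] (hc : ∀ e ∈ G.edgeSet, 0 ≤ c e) (p : G.Walk u v)
    {s : Finset (Sym2 V)} (hs : ∀ e ∈ s, e ∈ p.edges) : ∑ e ∈ s, c e ≤ walkCost c p := by
  have hc' : ∀ e ∈ p.edges.toFinset, 0 ≤ c e :=
    fun e he => hc e (p.edges_subset_edgeSet (List.mem_toFinset.1 he))
  calc ∑ e ∈ s, c e ≤ ∑ e ∈ p.edges.toFinset, c e :=
        sum_le_sum_of_subset_of_nonneg (fun e he => List.mem_toFinset.2 (hs e he))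
          fun e he _ => hc' e he
    _ ≤ ∑ e ∈ p.edges.toFinset, p.edges.count e • c e := sum_le_sum fun e he =>
        le_smul_of_one_le_left (hc' e he) (List.count_pos_iff.2 (List.mem_toFinset.1 he))
    _ = walkCost c p := (sum_list_map_count _ _).symm

theorem walkCost_eq_sum_of_isTrail [DecidableEq V] {p : G.Walk u v} (hp : p.IsTrail) :
    walkCost c p = ∑ e ∈ p.edges.toFinset, c e :=
  (List.sum_toFinset c hp.edges_nodup).symm

end WalkCost

/-- If an edge `e = s(a, b)` of a cycle graph with total weight `C` satisfies
`c e > C - c e`, then the weighted distance between its endpoints equals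
`C - c e`, and no minimum-weight walk between its endpoints traverses `e`. -/
theorem stmt_6 {V : Type*} [Fintype V] [DecidableEq V] (G : SimpleGraph V)
    [DecidableRel G.Adj] (hcyc : IsCycleGraph G)
    (c : Sym2 V → ℝ) (hc : ∀ e ∈ G.edgeSet, 0 < c e)
    (C : ℝ) (hC : C = ∑ e ∈ G.edgeFinset, c e)
    (a b : V) (hab : s(a, b) ∈ G.edgeSet)
    (hheavy : c s(a, b) > C - c s(a, b)) :
    sInf {x : ℝ | ∃ p : G.Walk a b, walkCost c p = x} = C - c s(a, b) ∧
      ∀ p : G.Walk a b, walkCost c p = C - c s(a, b) → s(a, b) ∉ p.edges := by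
  obtain ⟨hconn, -, hreg⟩ := hcyc
  have hc₀ : ∀ e ∈ G.edgeSet, 0 ≤ c e := fun e he => (hc e he).le
  have hdeg : ∀ v, G.degree v ≤ 2 := fun v => (hreg v).le
  have hrest : ∑ e ∈ G.edgeFinset.erase s(a, b), c e = C - c s(a, b) := by
    rw [hC, sum_erase_eq_sub (mem_edgeFinset.2 hab)]
  have hlower : ∀ q : G.Walk a b, C - c s(a, b) ≤ walkCost c q := by
    intro q
    by_cases he : s(a, b) ∈ q.edges
    · linarith [le_walkCost_of_mem_edges hc₀ he]
    · rw [← hrest]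
      refine sum_le_walkCost hc₀ q fun e hmem => ?_
      obtain ⟨hne, hedge⟩ := mem_erase.1 hmem
      exact q.mem_edges_of_ne_of_notMem_edges hconn hdeg hab he (mem_edgeFinset.1 hedge) hne
  obtain ⟨p, hp⟩ : ∃ p : G.Walk a b, s(a, b) ∉ p.edges := by
    simpa using (isBridge_iff_forall_walk_mem_edges (G := G)).not.1
      (hconn.not_isBridge_of_isRegularOfDegree_two hreg hab)
  have hpath : p.bypass.edges.toFinset = G.edgeFinset.erase s(a, b) := by
    have hp' : s(a, b) ∉ p.bypass.edges := fun h => hp (p.edges_bypass_subset_edges h)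
    ext e
    simp only [List.mem_toFinset, mem_erase, mem_edgeFinset]
    exact ⟨fun h => ⟨ne_of_mem_of_not_mem h hp', p.bypass.edges_subset_edgeSet h⟩,
      fun ⟨hne, he⟩ => p.bypass.mem_edges_of_ne_of_notMem_edges hconn hdeg hab hp' he hne⟩
  refine ⟨IsLeast.csInf_eq ⟨⟨p.bypass, ?_⟩, ?_⟩, fun q hq he => ?_⟩
  · rw [walkCost_eq_sum_of_isTrail p.bypass_isPath.isTrail, hpath, hrest]
  · rintro x ⟨q, rfl⟩
    exact hlower q
  · linarith [le_walkCost_of_mem_edges hc₀ he]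
end

section
/- If a closed walk visits every vertex of a cycle graph and does not traverse some edge e of the cycle, then it traverses every other edge of the cycle at least twice, counted with multiplicity. -/
namespace SimpleGraph

variable {V : Type*} {G : SimpleGraph V}

lemma isCycles_of_degree_eq_two [Fintype V] [DecidableRel G.Adj] (hdeg : ∀ v, G.degree v = 2) :
    G.IsCycles := fun v _ ↦ by
  rw [Set.ncard_eq_toFinset_card', Set.toFinset_card, card_neighborSet_eq_degree, hdeg]

lemma Walk.IsCycle.mem_edges_of_isCycles [LocallyFinite G] {u : V} {c : G.Walk u u}
    (hc : c.IsCycle) (hcyc : G.IsCycles) (hconn : G.Connected) {e : Sym2 V}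
    (he : e ∈ G.edgeSet) : e ∈ c.edges := by
  have hverts : ∀ v, v ∈ c.toSubgraph.verts := by
    by_contra! ⟨v, hv⟩
    obtain ⟨d, -, hd, hd'⟩ :=
      (hconn u v).some.exists_boundary_dart _ c.start_mem_verts_toSubgraph hv
    exact hd' ((hc.adj_toSubgraph_iff_of_isCycles hcyc hd _).mpr d.adj).snd_mem
  induction e using Sym2.ind with
  | _ a b =>
    rw [← Walk.adj_toSubgraph_iff_mem_edges]
    exact (hc.adj_toSubgraph_iff_of_isCycles hcyc (hverts a) b).mpr he

lemma IsCycles.isAcyclic_deleteEdges [LocallyFinite G] (hcyc : G.IsCycles) (hconn : G.Connected)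
    {e : Sym2 V} (he : e ∈ G.edgeSet) : (G.deleteEdges {e}).IsAcyclic := by
  intro u c hc
  have hmem : e ∈ (c.mapLe (G.deleteEdges_le {e})).edges :=
    (hc.mapLe _).mem_edges_of_isCycles hcyc hconn he
  rw [Walk.edges_mapLe_eq_edges] at hmem
  simpa [edgeSet_deleteEdges] using c.edges_subset_edgeSet hmem

section Bridge

variable [DecidableEq V] {a b : V}

/-- Crossing the bridge `s(a, b)` is the only way to change sides, where the side of a vertex is
whether it is reachable from `a` without the bridge. -/
lemma IsBridge.even_count_edges_iff (hab : G.IsBridge s(a, b)) {u v : V} (p : G.Walk u v) :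
    Even (p.edges.count s(a, b)) ↔
      ((G.deleteEdges {s(a, b)}).Reachable a u ↔ (G.deleteEdges {s(a, b)}).Reachable a v) := by
  induction p with
  | nil => simp
  | @cons x y z hxy q ih =>
    by_cases hf : s(x, y) = s(a, b)
    · have hside : ¬((G.deleteEdges {s(a, b)}).Reachable a x ↔
          (G.deleteEdges {s(a, b)}).Reachable a y) := by
        rcases Sym2.eq_iff.mp hf with ⟨rfl, rfl⟩ | ⟨rfl, rfl⟩
        · exact fun h ↦ hab (h.mp .rfl)
        · exact fun h ↦ hab (h.mpr .rfl)
      rw [Walk.edges_cons, hf, List.count_cons_self, Nat.even_add_one, ih]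
      tauto
    · have hadj : (G.deleteEdges {s(a, b)}).Adj x y := by simp [hxy, hf]
      have hside : (G.deleteEdges {s(a, b)}).Reachable a x ↔
          (G.deleteEdges {s(a, b)}).Reachable a y :=
        ⟨fun h ↦ h.trans hadj.reachable, fun h ↦ h.trans hadj.symm.reachable⟩
      rw [Walk.edges_cons, List.count_cons_of_ne hf, ih, hside]

lemma IsBridge.mem_edges_of_mem_support (hab : G.IsBridge s(a, b)) {u v : V} (p : G.Walk u v)
    (ha : a ∈ p.support) (hb : b ∈ p.support) : s(a, b) ∈ p.edges := by
  have hmem := isBridge_iff_forall_walk_mem_edges.mp hab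
    ((p.takeUntil a ha).reverse.append (p.takeUntil b hb))
  rw [Walk.edges_append, Walk.edges_reverse, List.mem_append, List.mem_reverse] at hmem
  rcases hmem with h | h <;> exact p.edges_takeUntil_subset_edges _ h

lemma IsBridge.two_le_count_edges (hab : G.IsBridge s(a, b)) {u : V} (p : G.Walk u u)
    (ha : a ∈ p.support) (hb : b ∈ p.support) : 2 ≤ p.edges.count s(a, b) := by
  obtain ⟨k, hk⟩ := (hab.even_count_edges_iff p).mpr Iff.rfl
  have hpos := List.count_pos_iff.mpr (hab.mem_edges_of_mem_support p ha hb)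
  omega

end Bridge

end SimpleGraph

open SimpleGraph

/-- If a closed walk visits every vertex of a cycle graph and does not traverse
some edge `e`, then it traverses every other edge of the cycle at least twice,
counted with multiplicity. -/
theorem stmt_7 {V : Type*} [Fintype V] [DecidableEq V] (G : SimpleGraph V)
    [DecidableRel G.Adj] (hcyc : IsCycleGraph G)
    (s : V) (w : G.Walk s s) (hspan : ∀ v : V, v ∈ w.support)
    (e : Sym2 V) (he : e ∈ G.edgeSet) (hnot : e ∉ w.edges) :
    ∀ f ∈ G.edgeSet, f ≠ e → 2 ≤ w.edges.count f := by
  obtain ⟨hconn, -, hdeg⟩ := hcyc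
  intro f hf hfe
  have hbridge : (G.deleteEdges {e}).IsBridge f :=
    isAcyclic_iff_forall_isBridge.mp
      ((isCycles_of_degree_eq_two hdeg).isAcyclic_deleteEdges hconn he) (by simp [hf, hfe])
  induction f using Sym2.ind with
  | _ a b =>
    have h := hbridge.two_le_count_edges (w.toDeleteEdge e hnot)
      (by simpa using hspan a) (by simpa using hspan b)
    rwa [Walk.edges_transfer] at h
end

section
/- In a tadpole graph with positive edge weights, let S denote the total weight of the stem edges, C_cyc the total weight of the cycle edges, and c_max the maximum weight among the cycle edges. Then every closed walk that starts and ends at the same vertex and visits every vertex has cost at least 2S + min(C_cyc, 2(C_cyc − c_max)). -/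
/-- A tadpole graph: a finite connected simple graph with exactly one vertex of
degree 1, exactly one vertex of degree 3, and all other vertices of degree 2. -/
def IsTadpole {V : Type*} [Fintype V] (G : SimpleGraph V) [DecidableRel G.Adj] : Prop :=
  G.Connected ∧ ∃ x y : V, x ≠ y ∧ G.degree x = 1 ∧ G.degree y = 3 ∧
    ∀ v : V, v ≠ x → v ≠ y → G.degree v = 2

/-!
A closed spanning walk crosses every bridge an even and positive number of times, hence at least
twice. A tadpole has as many edges as vertices, so deleting any cycle edge `e₀` leaves a spanning
tree. A closed spanning walk that traverses every cycle edge pays at least `C_cyc` on the cycle;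
one that misses some cycle edge `e₀` is a walk in the tree `G - e₀`, so it crosses every other
cycle edge at least twice and pays at least `2 (C_cyc - c e₀) ≥ 2 (C_cyc - c_max)` there.
-/

open Finset

theorem Finset.mul_sum_le_sum_mul_of_le {ι R : Type*} [Semiring R] [PartialOrder R]
    [IsOrderedRing R] (s : Finset ι) {k : R} {n c : ι → R} (hn : ∀ i ∈ s, k ≤ n i)
    (hc : ∀ i ∈ s, 0 ≤ c i) : k * ∑ i ∈ s, c i ≤ ∑ i ∈ s, n i * c i := by
  rw [mul_sum]
  exact sum_le_sum fun i hi => mul_le_mul_of_nonneg_right (hn i hi) (hc i hi)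

namespace SimpleGraph

variable {V : Type*} {G : SimpleGraph V}

namespace Walk

variable [DecidableEq V]

theorem even_count_edges_iff_of_isBridge {a b : V} (hab : G.IsBridge s(a, b)) {u v : V}
    (p : G.Walk u v) :
    Even (p.edges.count s(a, b)) ↔
      ((G.deleteEdges {s(a, b)}).Reachable a u ↔ (G.deleteEdges {s(a, b)}).Reachable a v) := by
  induction p with
  | nil => simp
  | @cons u u' v h q ih =>
    rw [edges_cons, List.count_cons]
    by_cases he : s(u, u') = s(a, b)
    · have hflip : ¬ ((G.deleteEdges {s(a, b)}).Reachable a u ↔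
          (G.deleteEdges {s(a, b)}).Reachable a u') := by
        rcases Sym2.eq_iff.mp he with ⟨rfl, rfl⟩ | ⟨rfl, rfl⟩ <;> simpa [isBridge_iff] using hab
      simp only [he, beq_self_eq_true, if_true, Nat.even_add_one, ih]
      tauto
    · have hadj : (G.deleteEdges {s(a, b)}).Adj u u' := deleteEdges_adj.mpr ⟨h, he⟩
      have hsame : (G.deleteEdges {s(a, b)}).Reachable a u ↔
          (G.deleteEdges {s(a, b)}).Reachable a u' :=
        ⟨fun r => r.trans hadj.reachable, fun r => r.trans hadj.reachable.symm⟩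
      simp only [he, beq_iff_eq, if_false, add_zero, ih, hsame]

theorem even_count_edges_of_isBridge {e : Sym2 V} (he : G.IsBridge e) {u : V}
    (p : G.Walk u u) : Even (p.edges.count e) := by
  induction e using Sym2.ind with
  | _ a b => exact (p.even_count_edges_iff_of_isBridge he).mpr Iff.rfl

theorem mem_edges_of_isBridge {a b u v : V} (hab : G.IsBridge s(a, b)) (p : G.Walk u v)
    (ha : a ∈ p.support) (hb : b ∈ p.support) : s(a, b) ∈ p.edges := by
  have hmem := isBridge_iff_forall_walk_mem_edges.mp hab
    ((p.takeUntil a ha).reverse.append (p.takeUntil b hb))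
  rw [edges_append, edges_reverse, List.mem_append, List.mem_reverse] at hmem
  exact hmem.elim (fun h => p.edges_takeUntil_subset_edges ha h)
    (fun h => p.edges_takeUntil_subset_edges hb h)

theorem two_le_count_edges_of_isBridge {e : Sym2 V} (he : G.IsBridge e) {u : V}
    (p : G.Walk u u) (hp : ∀ v, v ∈ p.support) : 2 ≤ p.edges.count e := by
  obtain ⟨m, hm⟩ := p.even_count_edges_of_isBridge he
  have hpos : 0 < p.edges.count e := by
    induction e using Sym2.ind with
    | _ a b => exact List.count_pos_iff.mpr (p.mem_edges_of_isBridge he (hp a) (hp b))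
  omega

theorem two_le_count_edges_of_isAcyclic_deleteEdges {e₀ f : Sym2 V}
    (hT : (G.deleteEdges {e₀}).IsAcyclic) {u : V} (p : G.Walk u u) (hp : ∀ v, v ∈ p.support)
    (he₀ : e₀ ∉ p.edges) (hf : f ∈ G.edgeSet) (hfe : f ≠ e₀) : 2 ≤ p.edges.count f := by
  have hbr : (G.deleteEdges {e₀}).IsBridge f :=
    isAcyclic_iff_forall_isBridge.mp hT (by simpa [edgeSet_deleteEdges] using ⟨hf, hfe⟩)
  simpa using (p.toDeleteEdge e₀ he₀).two_le_count_edges_of_isBridge hbr (by simpa using hp)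

end Walk

variable [Fintype V] [DecidableRel G.Adj]

theorem Connected.isTree_deleteEdges_of_card_edgeFinset (hG : G.Connected)
    (hcard : #G.edgeFinset = Fintype.card V) {e : Sym2 V} (he : e ∈ G.edgeSet)
    (hnb : ¬ G.IsBridge e) : (G.deleteEdges {e}).IsTree := by
  refine isTree_iff_connected_and_card.mpr ⟨?_, ?_⟩
  · induction e using Sym2.ind with
    | _ a b => exact hG.connected_delete_edge_of_not_isBridge hnb
  · rw [edgeSet_deleteEdges, Nat.card_coe_set_eq, Set.ncard_sdiff_singleton_add_one he
      G.edgeSet.toFinite, Nat.card_eq_fintype_card, ← hcard, ← coe_edgeFinset, Set.ncard_coe_finset]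

variable [DecidableEq V]

theorem walkCost_eq_sum_count (c : Sym2 V → ℝ) {u v : V} (p : G.Walk u v) :
    walkCost c p = ∑ e ∈ G.edgeFinset, (p.edges.count e : ℝ) * c e := by
  rw [walkCost, sum_list_map_count]
  simp_rw [nsmul_eq_mul]
  refine sum_subset (fun e he => ?_) (fun e _ he => ?_)
  · exact mem_edgeFinset.mpr (p.edges_subset_edgeSet (List.mem_toFinset.mp he))
  · simp [List.count_eq_zero.mpr (mt List.mem_toFinset.mpr he)]

theorem two_mul_sum_bridges_le_sum_count [DecidablePred G.IsBridge] {c : Sym2 V → ℝ}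
    (hc : ∀ e ∈ G.edgeSet, 0 ≤ c e) {u : V} (p : G.Walk u u) (hp : ∀ v, v ∈ p.support) :
    2 * ∑ e ∈ G.edgeFinset.filter (fun e => G.IsBridge e), c e ≤
      ∑ e ∈ G.edgeFinset.filter (fun e => G.IsBridge e), (p.edges.count e : ℝ) * c e := by
  refine mul_sum_le_sum_mul_of_le _ (fun e he => ?_) (fun e he => hc e ?_)
  · exact_mod_cast p.two_le_count_edges_of_isBridge (mem_filter.mp he).2 hp
  · exact mem_edgeFinset.mp (mem_filter.mp he).1

theorem min_le_sum_count_nonbridges [DecidablePred G.IsBridge] (hG : G.Connected)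
    (hcard : #G.edgeFinset = Fintype.card V) {c : Sym2 V → ℝ} (hc : ∀ e ∈ G.edgeSet, 0 ≤ c e)
    {cmax : ℝ} (hcmax : ∀ e ∈ G.edgeSet, ¬ G.IsBridge e → c e ≤ cmax) {u : V}
    (p : G.Walk u u) (hp : ∀ v, v ∈ p.support) :
    min (∑ e ∈ G.edgeFinset.filter (fun e => ¬ G.IsBridge e), c e)
        (2 * (∑ e ∈ G.edgeFinset.filter (fun e => ¬ G.IsBridge e), c e - cmax)) ≤
      ∑ e ∈ G.edgeFinset.filter (fun e => ¬ G.IsBridge e), (p.edges.count e : ℝ) * c e := by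
  set N := G.edgeFinset.filter (fun e => ¬ G.IsBridge e)
  have hNc : ∀ e ∈ N, 0 ≤ c e := fun e he => hc e (mem_edgeFinset.mp (mem_filter.mp he).1)
  by_cases hall : ∀ e ∈ N, e ∈ p.edges
  · refine (min_le_left _ _).trans ?_
    simpa using mul_sum_le_sum_mul_of_le N (k := 1) (fun e he => by
      exact_mod_cast List.count_pos_iff.mpr (hall e he)) hNc
  obtain ⟨e₀, he₀N, he₀p⟩ := not_forall₂.mp hall
  obtain ⟨he₀G, he₀nb⟩ := mem_filter.mp he₀N
  have hT := hG.isTree_deleteEdges_of_card_edgeFinset hcard (mem_edgeFinset.mp he₀G) he₀nb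
  have htwice : 2 * ∑ e ∈ N.erase e₀, c e ≤ ∑ e ∈ N.erase e₀, (p.edges.count e : ℝ) * c e := by
    refine mul_sum_le_sum_mul_of_le _ (fun f hf => ?_) (fun f hf => hNc f (mem_of_mem_erase hf))
    obtain ⟨hfe, hfN⟩ := mem_erase.mp hf
    exact_mod_cast p.two_le_count_edges_of_isAcyclic_deleteEdges hT.isAcyclic hp he₀p
      (mem_edgeFinset.mp (mem_filter.mp hfN).1) hfe
  have hsub : ∑ e ∈ N.erase e₀, (p.edges.count e : ℝ) * c e ≤
      ∑ e ∈ N, (p.edges.count e : ℝ) * c e :=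
    sum_le_sum_of_subset_of_nonneg (erase_subset _ _)
      (fun e he _ => mul_nonneg (Nat.cast_nonneg _) (hNc e he))
  have hsplit := add_sum_erase N c he₀N
  have hce₀ := hcmax e₀ (mem_edgeFinset.mp he₀G) he₀nb
  calc min (∑ e ∈ N, c e) (2 * (∑ e ∈ N, c e - cmax))
      ≤ 2 * (∑ e ∈ N, c e - cmax) := min_le_right _ _
    _ ≤ 2 * ∑ e ∈ N.erase e₀, c e := by linarith
    _ ≤ ∑ e ∈ N, (p.edges.count e : ℝ) * c e := htwice.trans hsub

end SimpleGraph

theorem IsTadpole.card_edgeFinset {V : Type*} [Fintype V] {G : SimpleGraph V}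
    [DecidableRel G.Adj] (h : IsTadpole G) : #G.edgeFinset = Fintype.card V := by
  obtain ⟨-, x, y, hxy, hx, hy, hother⟩ := h
  have hexcess : ∑ v, ((G.degree v : ℤ) - 2) = 0 := by
    rw [Fintype.sum_eq_add x y hxy (fun v ⟨hvx, hvy⟩ => by simp [hother v hvx hvy]), hx, hy]
    norm_num
  have hsum := G.sum_degrees_eq_twice_card_edges
  rw [sum_sub_distrib, sub_eq_zero, ← Nat.cast_sum, hsum] at hexcess
  simp only [Nat.cast_mul, Nat.cast_ofNat, sum_const, card_univ, Int.nsmul_eq_mul] at hexcess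
  omega

open SimpleGraph in
/-- In a tadpole graph with positive edge weights, with `S` the total weight of
the stem edges (bridges), `Ccyc` the total weight of the cycle edges
(non-bridges), and `cmax` the maximum weight among the cycle edges, every
closed spanning walk has cost at least `2 * S + min Ccyc (2 * (Ccyc - cmax))`. -/
theorem stmt_11 {V : Type*} [Fintype V] [DecidableEq V] (G : SimpleGraph V)
    [DecidableRel G.Adj] [DecidablePred G.IsBridge] (htad : IsTadpole G)
    (c : Sym2 V → ℝ) (hc : ∀ e ∈ G.edgeSet, 0 < c e)
    (S : ℝ) (hS : S = ∑ e ∈ G.edgeFinset.filter (fun e => G.IsBridge e), c e)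
    (Ccyc : ℝ) (hCcyc : Ccyc = ∑ e ∈ G.edgeFinset.filter (fun e => ¬ G.IsBridge e), c e)
    (cmax : ℝ) (hcmax : IsGreatest (c '' {e ∈ G.edgeSet | ¬ G.IsBridge e}) cmax)
    (s : V) (w : G.Walk s s) (hspan : ∀ v : V, v ∈ w.support) :
    2 * S + min Ccyc (2 * (Ccyc - cmax)) ≤ walkCost c w := by
  have hc' : ∀ e ∈ G.edgeSet, 0 ≤ c e := fun e he => (hc e he).le
  have hcmax' : ∀ e ∈ G.edgeSet, ¬ G.IsBridge e → c e ≤ cmax :=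
    fun e he hnb => hcmax.2 ⟨e, ⟨he, hnb⟩, rfl⟩
  rw [walkCost_eq_sum_count, ← sum_filter_add_sum_filter_not _ (fun e => G.IsBridge e), hS, hCcyc]
  exact add_le_add (two_mul_sum_bridges_le_sum_count hc' w hspan)
    (min_le_sum_count_nonbridges htad.1 htad.card_edgeFinset hc' hcmax' w hspan)
end
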